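/- arXiv:1702.03806 — 3 statements merged into one kernel-verified Lean document; each statement's English description precedes it below -/
import Mathlib

section
/- Let J be an ideal of the polynomial ring C[z_1,...,z_d]. If a polynomial p satisfies p(X_1,...,X_d) = 0 for every n ≥ 1 and every d-tuple (X_1,...,X_d) of pairwise commuting n×n complex matrices such that q(X_1,...,X_d) = 0 for all q ∈ J, then p ∈ J. -/
/-!
If `p ∉ J`, pick a maximal ideal `M` containing the annihilator of `p` modulo `J`. Krull's
intersection theorem for the module `A ⧸ J` shows that `p ∉ J + M ^ k` for some `k`, and
`A ⧸ (J + M ^ k)` has Krull dimension zero, so it is Artinian and hence finite-dimensional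
over `ℂ`. Multiplication by the coordinates on this quotient gives commuting matrices at which
`J` vanishes but `p` does not.
-/

namespace Ideal

variable {A : Type*} [CommRing A]

theorem exists_mem_one_sub_mul_mem_of_forall_mem_sup_pow [IsNoetherianRing A] {J M : Ideal A}
    {p : A} (h : ∀ k : ℕ, p ∈ J ⊔ M ^ k) : ∃ r ∈ M, (1 - r) * p ∈ J := by
  have hp : Quotient.mk J p ∈ (⨅ k : ℕ, M ^ k • ⊤ : Submodule A (A ⧸ J)) := by
    refine Submodule.mem_iInf _ |>.mpr fun k => ?_
    rw [smul_top_eq_map, Submodule.restrictScalars_mem, Quotient.algebraMap_eq,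
      mem_quotient_iff_mem_sup, sup_comm]
    exact h k
  obtain ⟨⟨r, hr⟩, hrp⟩ := (M.mem_iInf_smul_pow_eq_bot_iff _).mp hp
  refine ⟨r, hr, ?_⟩
  rw [Algebra.smul_def, Quotient.algebraMap_eq, ← map_mul, Quotient.eq] at hrp
  simpa [sub_mul] using J.neg_mem hrp

theorem exists_isMaximal_notMem_sup_pow [IsNoetherianRing A] {J : Ideal A} {p : A}
    (hp : p ∉ J) : ∃ M : Ideal A, M.IsMaximal ∧ ∃ k : ℕ, p ∉ J ⊔ M ^ k := by
  have hcolon : J.colon (span {p}) ≠ ⊤ := fun htop =>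
    hp <| one_mul p ▸ mem_colon_span_singleton.mp (htop ▸ Submodule.mem_top)
  obtain ⟨M, hM, hcolonM⟩ := exists_le_maximal _ hcolon
  refine ⟨M, hM, not_forall.mp fun h => ?_⟩
  obtain ⟨r, hr, hrp⟩ := exists_mem_one_sub_mul_mem_of_forall_mem_sup_pow h
  exact hM.ne_top <| (eq_top_iff_one M).mpr <| by
    simpa using M.add_mem (hcolonM (mem_colon_span_singleton.mpr hrp)) hr

end Ideal

variable {K A : Type*} [Field K] [CommRing A] [Algebra K A] [Algebra.FiniteType K A]

theorem Module.finite_quotient_of_pow_le {I M : Ideal A} [M.IsMaximal] {k : ℕ} (h : M ^ k ≤ I) :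
    Module.Finite K (A ⧸ I) := by
  have : IsNoetherianRing (A ⧸ I) := Algebra.FiniteType.isNoetherianRing K _
  have : Ring.KrullDimLE 0 (A ⧸ I) :=
    Ideal.krullDimLE_zero_quotient_iff_forall_minimalPrimes_isMaximal.mpr fun P hP => by
      have hPprime := hP.1.1
      exact ‹M.IsMaximal›.eq_of_le hPprime.ne_top (hPprime.le_of_pow_le (h.trans hP.1.2)) ▸ ‹_›
  have : IsArtinianRing (A ⧸ I) := IsNoetherianRing.isArtinianRing_of_krullDimLE_zero
  exact Module.finite_of_isArtinianRing K _

theorem Ideal.exists_finite_quotient_notMem {J : Ideal A} {p : A} (hp : p ∉ J) :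
    ∃ I : Ideal A, J ≤ I ∧ p ∉ I ∧ Module.Finite K (A ⧸ I) := by
  have : IsNoetherianRing A := Algebra.FiniteType.isNoetherianRing K A
  obtain ⟨M, hM, k, hpk⟩ := exists_isMaximal_notMem_sup_pow hp
  exact ⟨J ⊔ M ^ k, le_sup_left, hpk, Module.finite_quotient_of_pow_le le_sup_right⟩

/-- **Commutative free Nullstellensatz.** If a polynomial `p` over `ℂ` vanishes under every
evaluation at a `d`-tuple of pairwise commuting `n × n` complex matrices (over all `n ≥ 1`)
that annihilates the ideal `J` (equivalently, under every unital `ℂ`-algebra homomorphism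
into matrices killing `J`), then `p ∈ J`. -/
theorem commutative_free_nullstellensatz (d : ℕ) (J : Ideal (MvPolynomial (Fin d) ℂ))
    (p : MvPolynomial (Fin d) ℂ)
    (h : ∀ (n : ℕ), 0 < n → ∀ X : Fin d → Matrix (Fin n) (Fin n) ℂ,
      (∀ i j, Commute (X i) (X j)) →
      ∀ φ : MvPolynomial (Fin d) ℂ →ₐ[ℂ] Matrix (Fin n) (Fin n) ℂ,
        (∀ i, φ (MvPolynomial.X i) = X i) →
        (∀ q ∈ J, φ q = 0) → φ p = 0) :
    p ∈ J := by
  by_contra hp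
  obtain ⟨I, hJI, hpI, _⟩ := Ideal.exists_finite_quotient_notMem (K := ℂ) hp
  have : Nontrivial (MvPolynomial (Fin d) ℂ ⧸ I) :=
    Ideal.Quotient.nontrivial_iff.mpr fun hI => hpI (hI ▸ Submodule.mem_top)
  let φ := (Algebra.leftMulMatrix (Module.finBasis ℂ _)).comp (Ideal.Quotient.mkₐ ℂ I)
  have hφJ : ∀ q ∈ J, φ q = 0 := fun q hq => by
    simp [φ, Ideal.Quotient.eq_zero_iff_mem.mpr (hJI hq)]
  have hφp : φ p = 0 :=
    h _ Module.finrank_pos _ (fun i j => (Commute.all _ _).map φ) φ (fun _ => rfl) hφJ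
  refine hpI (Ideal.Quotient.eq_zero_iff_mem.mp
    (Algebra.leftMulMatrix_injective (Module.finBasis ℂ _) ?_))
  simpa [φ] using hφp
end

section
/- Let k be an algebraically closed field, J an ideal of k[x_1,...,x_d], A = k[x_1,...,x_d]/J, and π : k[x_1,...,x_d] → A the quotient map. If f is a polynomial such that φ(π(f)) = 0 for every n ≥ 1 and every k-algebra homomorphism φ : A → M_n(k), then f ∈ J. -/
/-!
If `π f ≠ 0`, pick a maximal ideal `m` containing its annihilator; Krull's intersection theorem
then gives `N` with `π f ∉ m ^ N`. The quotient `A ⧸ m ^ N` is an Artinian algebra of finite type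
over `k`, hence finite-dimensional by Zariski's lemma, and its regular representation is a faithful
`A ⧸ m ^ N → Mₙ(k)`. Composed with `A → A ⧸ m ^ N` it does not kill `π f`.
-/

theorem Ideal.exists_isMaximal_notMem_pow {R : Type*} [CommRing R] [IsNoetherianRing R]
    {a : R} (ha : a ≠ 0) : ∃ m : Ideal R, m.IsMaximal ∧ ∃ n : ℕ, a ∉ m ^ n := by
  obtain ⟨m, hm, hle⟩ := Ideal.exists_le_maximal (Ideal.torsionOf R R a)
    ((Ideal.torsionOf_eq_top_iff (R := R) a).not.mpr ha)
  refine ⟨m, hm, ?_⟩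
  by_contra! hmem
  -- Krull: `a ∈ ⋂ mⁿ` gives `r ∈ m` with `r a = a`, so `1 - r` kills `a` and lies in `m`.
  obtain ⟨⟨r, hr⟩, hra⟩ := (m.mem_iInf_smul_pow_eq_bot_iff a).mp <|
    Submodule.mem_iInf _ |>.mpr fun n ↦ by simpa [smul_eq_mul] using hmem n
  have hsub : 1 - r ∈ m := hle <| by
    rw [Ideal.mem_torsionOf_iff, sub_smul, hra, one_smul, sub_self]
  exact hm.ne_top <| (Ideal.eq_top_iff_one m).mpr <| by simpa using m.add_mem hsub hr

theorem Ideal.IsMaximal.finite_quotient_pow {k A : Type*} [Field k] [CommRing A] [Algebra k A]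
    [Algebra.FiniteType k A] {m : Ideal A} (hm : m.IsMaximal) (n : ℕ) :
    Module.Finite k (A ⧸ m ^ n) := by
  have : IsNoetherianRing A := Algebra.FiniteType.isNoetherianRing k A
  have : Ring.KrullDimLE 0 (A ⧸ m ^ n) :=
    Ideal.krullDimLE_zero_quotient_iff_forall_minimalPrimes_isMaximal.mpr fun P hP ↦ by
      have hP_prime := hP.1.1
      exact hm.eq_of_le hP_prime.ne_top (hP_prime.le_of_pow_le hP.1.2) ▸ hm
  have : IsArtinianRing (A ⧸ m ^ n) := IsNoetherianRing.isArtinianRing_of_krullDimLE_zero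
  exact Module.finite_of_isArtinianRing k (A ⧸ m ^ n)

theorem exists_injective_algHom_matrix (k B : Type*) [Field k] [Ring B] [Algebra k B]
    [Module.Finite k B] [Nontrivial B] :
    ∃ n, 0 < n ∧ ∃ φ : B →ₐ[k] Matrix (Fin n) (Fin n) k, Function.Injective φ :=
  let b := Module.finBasis k B
  ⟨_, Module.finrank_pos, (algEquivMatrix b).toAlgHom.comp (Algebra.lmul k B),
    (algEquivMatrix b).injective.comp Algebra.lmul_injective⟩

theorem mem_of_forall_finiteDim_rep_quotient_eq_zero_general
    (k : Type*) [Field k] (d : ℕ)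
    (J : Ideal (MvPolynomial (Fin d) k)) (f : MvPolynomial (Fin d) k)
    (h : ∀ (n : ℕ), 0 < n →
      ∀ φ : (MvPolynomial (Fin d) k ⧸ J) →ₐ[k] Matrix (Fin n) (Fin n) k,
        φ (Ideal.Quotient.mkₐ k J f) = 0) :
    f ∈ J := by
  by_contra hf
  have hf' : Ideal.Quotient.mkₐ k J f ≠ 0 := by
    rwa [Ideal.Quotient.mkₐ_eq_mk, ne_eq, Ideal.Quotient.eq_zero_iff_mem]
  obtain ⟨m, hm, N, hN⟩ := Ideal.exists_isMaximal_notMem_pow hf'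
  have := hm.finite_quotient_pow (k := k) N
  have : Nontrivial (_ ⧸ m ^ N) :=
    Ideal.Quotient.nontrivial_iff.mpr fun htop ↦ hN (htop ▸ Submodule.mem_top)
  obtain ⟨n, hn, φ, hφ⟩ := exists_injective_algHom_matrix k (_ ⧸ m ^ N)
  apply hN
  rw [← Ideal.Quotient.eq_zero_iff_mem, ← map_eq_zero_iff φ hφ]
  exact h n hn (φ.comp (Ideal.Quotient.mkₐ k (m ^ N)))

/-- Let `k` be an algebraically closed field and `J` an ideal of `k[x₁,…,x_d]`.
If `f` is a polynomial whose image in `A = k[x]/J` is killed by every `k`-algebra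
homomorphism `A → Mₙ(k)` (for every `n ≥ 1`), then `f ∈ J`. -/
theorem mem_of_forall_finiteDim_rep_quotient_eq_zero
    (k : Type*) [Field k] [IsAlgClosed k] (d : ℕ)
    (J : Ideal (MvPolynomial (Fin d) k)) (f : MvPolynomial (Fin d) k)
    (h : ∀ (n : ℕ), 0 < n →
      ∀ φ : (MvPolynomial (Fin d) k ⧸ J) →ₐ[k] Matrix (Fin n) (Fin n) k,
        φ (Ideal.Quotient.mkₐ k J f) = 0) :
    f ∈ J :=
  mem_of_forall_finiteDim_rep_quotient_eq_zero_general k d J f h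
end

section
/- Let A be a unital subalgebra of M_n(C) and let W ∈ M_n(C). Suppose that for every k ≥ 1, every subspace of C^{nk} that is invariant under the k-fold ampliation a^{(k)} = a ⊕ a ⊕ ... ⊕ a for all a ∈ A is also invariant under W^{(k)}. Then W ∈ A. -/
/-- Let `A` be a unital subalgebra of `Mₙ(ℂ)` and `W ∈ Mₙ(ℂ)`. If for every `k ≥ 1`
every subspace of `ℂ^{nk} = (ℂ^n)^k` invariant under the `k`-fold ampliation `a ⊕ ⋯ ⊕ a`
of every `a ∈ A` is also invariant under the `k`-fold ampliation of `W`, then `W ∈ A`. -/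
theorem mem_of_ampliation_invariant_subspaces (n : ℕ)
    (A : Subalgebra ℂ (Matrix (Fin n) (Fin n) ℂ)) (W : Matrix (Fin n) (Fin n) ℂ)
    (h : ∀ (k : ℕ), 0 < k → ∀ M : Submodule ℂ (Fin k → (Fin n → ℂ)),
      (∀ a ∈ A, ∀ x ∈ M, (fun j => a.mulVec (x j)) ∈ M) →
      ∀ x ∈ M, (fun j => W.mulVec (x j)) ∈ M) :
    W ∈ A := by
  rcases Nat.eq_zero_or_pos n with hn | hn
  · subst hn
    have : W = 0 := Subsingleton.elim _ _
    rw [this]; exact A.toSubmodule.zero_mem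
  · -- φ sends a matrix to its tuple of columns
    let φ : Matrix (Fin n) (Fin n) ℂ →ₗ[ℂ] (Fin n → (Fin n → ℂ)) :=
      { toFun := fun a => fun j => a.mulVec (Pi.single j 1)
        map_add' := by
          intro a b; funext j i; simp [Matrix.add_mulVec]
        map_smul' := by
          intro c a; funext j i; simp [Matrix.smul_mulVec] }
    let M : Submodule ℂ (Fin n → (Fin n → ℂ)) := (Subalgebra.toSubmodule A).map φ
    have hinv : ∀ a ∈ A, ∀ x ∈ M, (fun j => a.mulVec (x j)) ∈ M := by
      rintro a ha x ⟨b, hb, rfl⟩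
      refine ⟨a * b, A.mul_mem ha hb, ?_⟩
      funext j i
      simp [φ, Matrix.mulVec, dotProduct, Matrix.mul_apply, Finset.sum_mul, mul_assoc]
    have hu : φ 1 ∈ M := ⟨1, A.one_mem, rfl⟩
    have hW := h n hn M hinv (φ 1) hu
    obtain ⟨c, hc, hcW⟩ := hW
    have : c = W := by
      ext i j
      have := congrFun (congrFun hcW j) i
      simpa [φ, Matrix.mulVec, dotProduct, Pi.single_apply, mul_ite,
        Matrix.one_apply, mul_one, mul_zero] using this
    rwa [← this]
end
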